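/- The degenerate r-Whitney numbers of the second kind satisfy W_{m,λ}^{(r)}(n,k) = Σ_{i=k}^{n} C(n,i) (r)_{n−i,λ} m^{i−k} S_{2,λ/m}(i,k), for all n ≥ k ≥ 0. -/

import Mathlib

open Finset

/-- generalized falling factorial: (x)_{n,λ} = x(x-λ)···(x-(n-1)λ) -/
def dff (lam x : ℝ) (n : ℕ) : ℝ := ∏ i ∈ Finset.range n, (x - i * lam)

/-- generalized rising factorial: ⟨x⟩_{n,λ} = x(x+λ)···(x+(n-1)λ) -/
def drf (lam x : ℝ) (n : ℕ) : ℝ := ∏ i ∈ Finset.range n, (x + i * lam)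

/-!
Split `m x + r` and expand `(m x + r)_{n,λ}` by the binomial theorem for degenerate falling
factorials. Rescaling gives `(m x)_{i,λ} = m^i (x)_{i,λ/m}`, which the degenerate Stirling numbers
expand in the falling factorials `(x)_k`. Exchanging the two sums yields a second expansion of
`(m x + r)_{n,λ}` in the basis `(x)_k`, and the coefficients of such an expansion are unique,
as one sees by evaluating at `x = 0, 1, 2, …` in turn.
-/

lemma dff_succ (lam x : ℝ) (n : ℕ) : dff lam x (n + 1) = dff lam x n * (x - n * lam) :=
  prod_range_succ _ n

lemma dff_add (lam x y : ℝ) (n : ℕ) :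
    dff lam (x + y) n =
      ∑ i ∈ range (n + 1), (n.choose i : ℝ) * (dff lam x i * dff lam y (n - i)) := by
  induction n with
  | zero => simp [dff]
  | succ n ih =>
    rw [sum_choose_succ_mul (fun i j => dff lam x i * dff lam y j), ← sum_add_distrib, dff_succ,
      ih, sum_mul]
    refine sum_congr rfl fun i hi => ?_
    have hin : i ≤ n := Nat.lt_succ_iff.mp (mem_range.mp hi)
    rw [show n + 1 - i = n - i + 1 by omega, dff_succ, dff_succ, Nat.cast_sub hin]
    ring

lemma dff_mul_left (lam c x : ℝ) (hc : c ≠ 0) (n : ℕ) :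
    dff lam (c * x) n = c ^ n * dff (lam / c) x n := by
  rw [dff, dff, show c ^ n = ∏ _i ∈ range n, c by simp, ← prod_mul_distrib]
  refine prod_congr rfl fun i _ => ?_
  field_simp

lemma dff_one_eq_eval_descPochhammer (x : ℝ) (k : ℕ) :
    dff 1 x k = (descPochhammer ℝ k).eval x := by
  simp [dff, descPochhammer_eval_eq_prod_range]

lemma dff_one_natCast_of_lt {j k : ℕ} (h : j < k) : dff 1 (j : ℝ) k = 0 := by
  rw [dff_one_eq_eval_descPochhammer, descPochhammer_eval_coe_nat_of_lt h]

lemma dff_one_natCast_self_ne_zero (j : ℕ) : dff 1 (j : ℝ) j ≠ 0 := by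
  rw [dff_one_eq_eval_descPochhammer, descPochhammer_eval_eq_descFactorial,
    Nat.descFactorial_self]
  exact_mod_cast j.factorial_ne_zero

lemma eq_zero_of_sum_mul_dff_one_eq_zero {N : ℕ} {a : ℕ → ℝ}
    (h : ∀ x : ℝ, ∑ k ∈ range N, a k * dff 1 x k = 0) : ∀ j < N, a j = 0 := by
  intro j
  induction j using Nat.strong_induction_on with
  | _ j ih =>
    intro hj
    have hsingle : ∑ k ∈ range N, a k * dff 1 (j : ℝ) k = a j * dff 1 (j : ℝ) j := by
      refine sum_eq_single j (fun k _ hkj => ?_) (fun hj' => absurd (mem_range.mpr hj) hj')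
      rcases lt_or_gt_of_ne hkj with hkj | hkj
      · rw [ih k hkj (hkj.trans hj), zero_mul]
      · rw [dff_one_natCast_of_lt hkj, mul_zero]
    have hzero := h j
    rw [hsingle] at hzero
    exact (mul_eq_zero.mp hzero).resolve_right (dff_one_natCast_self_ne_zero j)

lemma coeff_eq_of_sum_mul_dff_one_eq {N : ℕ} {a b : ℕ → ℝ}
    (h : ∀ x : ℝ, ∑ k ∈ range N, a k * dff 1 x k = ∑ k ∈ range N, b k * dff 1 x k) :
    ∀ j < N, a j = b j := by
  have hdiff := eq_zero_of_sum_mul_dff_one_eq_zero (N := N) (a := fun k => a k - b k) fun x => by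
    simp only [sub_mul, sum_sub_distrib, h x, sub_self]
  exact fun j hj => sub_eq_zero.mp (hdiff j hj)

lemma dff_mul_add_eq_sum (lam m r x : ℝ) (hm : m ≠ 0) (S2 : ℕ → ℕ → ℝ)
    (hS2 : ∀ n : ℕ, ∀ x : ℝ,
      dff (lam / m) x n = ∑ k ∈ range (n + 1), S2 n k * dff 1 x k)
    (n : ℕ) :
    dff lam (m * x + r) n = ∑ k ∈ range (n + 1),
      (∑ i ∈ Icc k n, (n.choose i : ℝ) * dff lam r (n - i) * m ^ i * S2 i k) * dff 1 x k := by
  have hterm : ∀ i ∈ range (n + 1),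
      (n.choose i : ℝ) * (dff lam (m * x) i * dff lam r (n - i)) =
        ∑ k ∈ range (i + 1),
          (n.choose i : ℝ) * dff lam r (n - i) * m ^ i * S2 i k * dff 1 x k := by
    intro i _
    rw [dff_mul_left lam m x hm, hS2, mul_sum, sum_mul, mul_sum]
    exact sum_congr rfl fun k _ => by ring
  rw [dff_add, sum_congr rfl hterm, sum_comm' (t' := range (n + 1)) (s' := fun k => Icc k n)]
  · simp only [sum_mul]
  · intro i k
    simp only [mem_range, mem_Icc]
    omega

theorem stmt5 (m : ℕ) (hm : 0 < m) (r : ℕ) (lam : ℝ) (W S2 : ℕ → ℕ → ℝ)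
    (hW : ∀ n : ℕ, ∀ x : ℝ,
      dff lam ((m : ℝ) * x + r) n = ∑ k ∈ range (n + 1), W n k * (m : ℝ) ^ k * dff 1 x k)
    (hS2 : ∀ n : ℕ, ∀ x : ℝ,
      dff (lam / m) x n = ∑ k ∈ range (n + 1), S2 n k * dff 1 x k) :
    ∀ n k : ℕ, k ≤ n →
      W n k = ∑ i ∈ Finset.Icc k n,
        (n.choose i : ℝ) * dff lam (r : ℝ) (n - i) * (m : ℝ) ^ (i - k) * S2 i k := by
  intro n k hkn
  have hm0 : (m : ℝ) ≠ 0 := Nat.cast_ne_zero.mpr hm.ne'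
  have hcoeff := coeff_eq_of_sum_mul_dff_one_eq
    (fun x => (hW n x).symm.trans (dff_mul_add_eq_sum lam m r x hm0 S2 hS2 n)) k (by omega)
  apply mul_right_cancel₀ (pow_ne_zero k hm0)
  rw [hcoeff, sum_mul]
  refine sum_congr rfl fun i hi => ?_
  rw [← pow_mul_pow_sub _ (mem_Icc.mp hi).1]
  ring
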